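/- Let r ≥ 2 and let Q be a blowup (with nonempty parts) of a 2-covered r-graph. Then for every r-graph H and every uncovered pair of vertices u, v of H, 2·inj(Q, H) ≤ inj(Q, H_{u→v}) + inj(Q, H_{v→u}). Consequently, the map H ↦ inj(Q, H) is symmetrization-increasing: for every H and every uncovered pair u, v, either inj(Q,H) < max{inj(Q,H_{u→v}), inj(Q,H_{v→u})} or inj(Q,H) = inj(Q,H_{u→v}) = inj(Q,H_{v→u}). -/

import Mathlib

open Finset

attribute [local instance 10] Classical.propDecidable

noncomputable section

/-- An `r`-uniform hypergraph on a finite set of vertices labeled by natural numbers: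
a finite collection of `r`-element subsets of the vertex set. -/
structure RGraph (r : ℕ) where
  verts : Finset ℕ
  edges : Finset (Finset ℕ)
  edge_card : ∀ e ∈ edges, e.card = r
  edge_sub : ∀ e ∈ edges, e ⊆ verts

namespace RGraph

variable {r : ℕ}

/-- number of vertices -/
def nv (H : RGraph r) : ℕ := H.verts.card

/-- delete a set of vertices (and all edges meeting it) -/
def deleteVerts (H : RGraph r) (S : Finset ℕ) : RGraph r where
  verts := H.verts \ S
  edges := H.edges.filter fun e => ∀ v ∈ S, v ∉ e
  edge_card := fun e he => H.edge_card e (Finset.mem_filter.1 he).1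
  edge_sub := by
    intro e he x hx
    rcases Finset.mem_filter.1 he with ⟨he1, he2⟩
    exact Finset.mem_sdiff.2 ⟨H.edge_sub e he1 hx, fun hxS => he2 x hxS hx⟩

/-- delete a single vertex -/
def deleteVert (H : RGraph r) (v : ℕ) : RGraph r := H.deleteVerts {v}

/-- induced subgraph on a set of vertices -/
def induce (H : RGraph r) (U : Finset ℕ) : RGraph r where
  verts := H.verts ∩ U
  edges := H.edges.filter fun e => e ⊆ U
  edge_card := fun e he => H.edge_card e (Finset.mem_filter.1 he).1
  edge_sub := fun e he x hx => Finset.mem_inter.2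
    ⟨H.edge_sub e (Finset.mem_filter.1 he).1 hx, (Finset.mem_filter.1 he).2 hx⟩

/-- delete a single edge -/
def deleteEdge (H : RGraph r) (e : Finset ℕ) : RGraph r where
  verts := H.verts
  edges := H.edges.erase e
  edge_card := fun f hf => H.edge_card f (Finset.mem_of_mem_erase hf)
  edge_sub := fun f hf => H.edge_sub f (Finset.mem_of_mem_erase hf)

/-- subgraph relation (may omit vertices and edges) -/
def IsSubgraph (H' H : RGraph r) : Prop := H'.verts ⊆ H.verts ∧ H'.edges ⊆ H.edges

/-- the link of a vertex -/
def link (H : RGraph r) (v : ℕ) : Finset (Finset ℕ) :=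
  (H.edges.filter fun e => v ∈ e).image fun e => e.erase v

/-- a pair of vertices is uncovered if no edge contains both -/
def Uncovered (H : RGraph r) (u v : ℕ) : Prop := ∀ e ∈ H.edges, ¬(u ∈ e ∧ v ∈ e)

/-- `H.symmetrize u v` is `H_{u → v}`: delete all edges containing `u` and add
`{u} ∪ e` for every `e` in the link of `v`. -/
def symmetrize (H : RGraph r) (u v : ℕ) : RGraph r where
  verts := insert u H.verts
  edges := (H.edges.filter fun e => u ∉ e) ∪
    ((H.edges.filter fun e => v ∈ e ∧ u ∉ e ∧ u ≠ v).image fun e => insert u (e.erase v))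
  edge_card := by
    intro e he
    rcases Finset.mem_union.1 he with he | he
    · exact H.edge_card e (Finset.mem_filter.1 he).1
    · rcases Finset.mem_image.1 he with ⟨f, hf, rfl⟩
      rcases Finset.mem_filter.1 hf with ⟨hf1, hv, hu, -⟩
      have h1 : u ∉ f.erase v := fun h => hu (Finset.mem_of_mem_erase h)
      have hfc := H.edge_card f hf1
      have hr1 : 0 < r := hfc ▸ Finset.card_pos.2 ⟨v, hv⟩
      rw [Finset.card_insert_of_notMem h1, Finset.card_erase_of_mem hv, hfc]
      omega
  edge_sub := by
    intro e he x hx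
    rcases Finset.mem_union.1 he with he | he
    · exact Finset.mem_insert_of_mem (H.edge_sub e (Finset.mem_filter.1 he).1 hx)
    · rcases Finset.mem_image.1 he with ⟨f, hf, rfl⟩
      rcases Finset.mem_insert.1 hx with rfl | hx
      · exact Finset.mem_insert_self _ _
      · exact Finset.mem_insert_of_mem
          (H.edge_sub f (Finset.mem_filter.1 hf).1 (Finset.mem_of_mem_erase hx))

/-- `H` is symmetrized if every uncovered pair of (distinct) vertices is equivalent,
i.e. has equal links. -/
def Symmetrized (H : RGraph r) : Prop :=
  ∀ u ∈ H.verts, ∀ v ∈ H.verts, u ≠ v → H.Uncovered u v → H.link u = H.link v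

/-- neighbourhood of a vertex: all vertices sharing an edge with `v` -/
def nbhd (H : RGraph r) (v : ℕ) : Finset ℕ :=
  H.verts.filter fun u => ∃ e ∈ H.edges, u ∈ e ∧ v ∈ e

/-- the link of a pair of vertices -/
def pairLink (H : RGraph r) (u v : ℕ) : Finset (Finset ℕ) :=
  (H.edges.filter fun e => u ∈ e ∧ v ∈ e).image fun e => (e.erase u).erase v

/-- `N_H^k(v)`: for `r ≥ 3`, the set of vertices `u` whose pair-link with `v`
contains at least `k` pairwise disjoint `(r-2)`-sets; for `r = 2`, the neighbourhood. -/
def bigNbhd (H : RGraph r) (k v : ℕ) : Finset ℕ :=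
  if r = 2 then H.nbhd v
  else H.verts.filter fun u => ∃ A ∈ (H.pairLink u v).powerset,
    k ≤ A.card ∧ ∀ a ∈ A, ∀ b ∈ A, a ≠ b → a ∩ b = ∅

/-- number of edges containing a vertex -/
def edeg (H : RGraph r) (v : ℕ) : ℕ := (H.edges.filter fun e => v ∈ e).card

end RGraph

/-! ## The Γ-framework -/

/-- `Γ`-degree of a vertex -/
def gdeg {r : ℕ} (Γ : RGraph r → ℝ) (H : RGraph r) (v : ℕ) : ℝ :=
  Γ H - Γ (H.deleteVert v)

/-- the extremal number `ex_Γ(n)` -/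
def exG {r : ℕ} (Γ : RGraph r → ℝ) (n : ℕ) : ℝ :=
  sSup {x | ∃ H : RGraph r, H.nv = n ∧ Γ H = x}

/-- the extremal average degree `exdeg_Γ(n) = k ⬝ ex_Γ(n) / n` -/
def exdeg {r : ℕ} (Γ : RGraph r → ℝ) (k : ℝ) (n : ℕ) : ℝ :=
  k * exG Γ n / n

/-- `Γ` is `k`-uniform -/
def IsUniform {r : ℕ} (Γ : RGraph r → ℝ) (k : ℝ) : Prop :=
  ∃ h : ℕ → ℝ, Filter.Tendsto (fun n => h n / exG Γ n) Filter.atTop (nhds 0) ∧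
    ∀ H : RGraph r, 0 < Γ H → |(∑ v ∈ H.verts, gdeg Γ H v) - k * Γ H| ≤ h H.nv

/-- `Γ` is `(δ*, c*, C*)`-smooth -/
def IsSmooth {r : ℕ} (Γ : RGraph r → ℝ) (k δs cs Cs : ℝ) : Prop :=
  ∃ h : ℕ → ℝ, Filter.Tendsto (fun n => h n / exG Γ n) Filter.atTop (nhds 0) ∧
    ∀ (n : ℕ) (δ : ℝ), 0 ≤ δ → δ ≤ δs → ∀ m : ℕ, (m : ℝ) = δ * n →
      exG Γ (n - m) ≤ exG Γ n - δ * k * exG Γ n + Cs * δ ^ (1 + cs) * exG Γ n + h n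

/-- `Γ` is locally `C`-Lipschitz -/
def IsLocallyLipschitz {r : ℕ} (Γ : RGraph r → ℝ) (k C : ℝ) : Prop :=
  ∃ h : ℕ → ℝ, Filter.Tendsto (fun n => h n / exdeg Γ k n) Filter.atTop (nhds 0) ∧
    ∀ (n : ℕ) (H : RGraph r), H.nv = n → 0 < Γ H → ∀ U ⊆ H.verts, ∀ v ∈ U,
      gdeg Γ H v - C * (((n : ℝ) - U.card) / n) * exdeg Γ k n - h n
        ≤ gdeg Γ (H.induce U) v

/-- `Γ` is continuous -/
def GammaContinuous {r : ℕ} (Γ : RGraph r → ℝ) : Prop :=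
  ∀ ε : ℝ, 0 < ε → ∃ δ : ℝ, 0 < δ ∧ ∃ N₀ : ℕ, ∀ n ≥ N₀, ∀ H H' : RGraph r,
    H.nv = n → H'.verts = H.verts → H'.edges ⊆ H.edges →
    (H.edges.card : ℝ) - δ * (n : ℝ) ^ r ≤ (H'.edges.card : ℝ) →
    Γ H - ε * exG Γ n ≤ Γ H'

/-- `Γ` is locally monotone -/
def IsLocallyMonotone {r : ℕ} (Γ : RGraph r → ℝ) : Prop :=
  ∀ H H' : RGraph r, 0 < Γ H → H'.IsSubgraph H → ∀ v ∈ H'.verts,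
    gdeg Γ H' v ≤ gdeg Γ H v

/-- a hereditary family of `r`-graphs -/
def Hereditary {r : ℕ} (ℌ : Set (RGraph r)) : Prop :=
  ∀ H ∈ ℌ, ∀ H' : RGraph r, H'.IsSubgraph H → H' ∈ ℌ

/-- `Γ` is symmetrization-increasing -/
def SymmetrizationIncreasing {r : ℕ} (Γ : RGraph r → ℝ) : Prop :=
  ∀ H : RGraph r, ∀ u ∈ H.verts, ∀ v ∈ H.verts, u ≠ v → H.Uncovered u v →
    Γ H < max (Γ (H.symmetrize u v)) (Γ (H.symmetrize v u)) ∨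
      (Γ H = Γ (H.symmetrize u v) ∧ Γ H = Γ (H.symmetrize v u))

/-- `Γ` is symmetrized-stable with respect to `ℌ` -/
def SymmetrizedStable {r : ℕ} (Γ : RGraph r → ℝ) (ℌ : Set (RGraph r)) : Prop :=
  ∀ H : RGraph r, H.Symmetrized → 0 < Γ H → H ∈ ℌ

/-- `Γ` is `(ε, N₀)`-vertex-extendable with respect to `ℌ` -/
def VertexExtendable {r : ℕ} (Γ : RGraph r → ℝ) (k : ℝ) (ℌ : Set (RGraph r))
    (ε : ℝ) (N₀ : ℕ) : Prop :=
  ∀ n ≥ N₀, ∀ H : RGraph r, H.nv = n →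
    (∀ v ∈ H.verts, (1 - ε) * exdeg Γ k n ≤ gdeg Γ H v) →
    (∃ v ∈ H.verts, H.deleteVert v ∈ ℌ) → H ∈ ℌ

/-- `Γ` is degree-stable with respect to `ℌ` -/
def DegreeStable {r : ℕ} (Γ : RGraph r → ℝ) (k : ℝ) (ℌ : Set (RGraph r)) : Prop :=
  ∃ ε : ℝ, 0 < ε ∧ ∃ N₀ : ℕ, ∀ n ≥ N₀, ∀ H : RGraph r, H.nv = n →
    (∀ v ∈ H.verts, (1 - ε) * exdeg Γ k n ≤ gdeg Γ H v) → H ∈ ℌ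

/-- `Γ` is edge-stable with respect to `ℌ` -/
def EdgeStableG {r : ℕ} (Γ : RGraph r → ℝ) (ℌ : Set (RGraph r)) : Prop :=
  ∀ ε : ℝ, 0 < ε → ∃ δ : ℝ, 0 < δ ∧ ∃ N₀ : ℕ, ∀ n ≥ N₀, ∀ H : RGraph r, H.nv = n →
    (1 - δ) * exG Γ n ≤ Γ H →
    ∃ H' : RGraph r, H'.verts = H.verts ∧ H'.edges ⊆ H.edges ∧
      ((H.edges \ H'.edges).card : ℝ) ≤ ε * (n : ℝ) ^ r ∧ H' ∈ ℌ

/-- `Γh` is a trajectory of `Γ` -/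
def IsTrajectoryOf {r : ℕ} (Γh Γ : RGraph r → ℝ) : Prop :=
  (∃ f : ℕ → ℝ, Filter.Tendsto (fun n => f n / exG Γh n) Filter.atTop (nhds 0) ∧
    ∀ n : ℕ, exG Γh n - f n ≤ exG Γ n) ∧
  ∃ g h : ℕ → ℝ,
    Filter.Tendsto (fun n => g n / (n : ℝ) ^ r) Filter.atTop (nhds 0) ∧
    Filter.Tendsto (fun n => h n / exG Γ n) Filter.atTop (nhds 0) ∧
    ∀ H : RGraph r, 0 < Γ H → ∃ H' : RGraph r, H'.IsSubgraph H ∧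
      (H.edges.card : ℝ) - g H.nv ≤ (H'.edges.card : ℝ) ∧ Γ H - h H.nv ≤ Γh H'

/-! ## Counting injective homomorphisms -/

/-- The set of injective homomorphisms from `Q` to `H`, encoded as maps `ℕ → ℕ`
which are the identity outside `Q.verts`. -/
def injHoms {r : ℕ} (Q H : RGraph r) : Set (ℕ → ℕ) :=
  {φ | Set.InjOn φ ↑Q.verts ∧ Set.MapsTo φ ↑Q.verts ↑H.verts ∧
    (∀ e ∈ Q.edges, e.image φ ∈ H.edges) ∧ ∀ x, x ∉ Q.verts → φ x = x}

/-- `inj(Q, H)`: the number of injective homomorphisms from `Q` to `H` -/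
def injc {r : ℕ} (Q H : RGraph r) : ℕ := (injHoms Q H).ncard

/-- `d_{Q,H}(v)`: the number of injective homomorphisms from `Q` to `H`
whose image contains `v` -/
def qdeg {r : ℕ} (Q H : RGraph r) (v : ℕ) : ℕ :=
  {φ ∈ injHoms Q H | ∃ x ∈ Q.verts, φ x = v}.ncard

/-- `H` is `F₀`-free: `F₀` is not (isomorphic to) a subgraph of `H` -/
def FreeOf {r : ℕ} (F₀ H : RGraph r) : Prop := injHoms F₀ H = ∅

/-- `Q` has no isolated vertices -/
def NoIsolated {r : ℕ} (Q : RGraph r) : Prop := ∀ v ∈ Q.verts, ∃ e ∈ Q.edges, v ∈ e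

/-- `H` is `ℓ`-partite (equivalently, `K_ℓ^r`-colorable) -/
def IsPartite {r : ℕ} (H : RGraph r) (ℓ : ℕ) : Prop :=
  ∃ c : ℕ → ℕ, (∀ v ∈ H.verts, c v < ℓ) ∧
    ∀ e ∈ H.edges, ∀ a ∈ e, ∀ b ∈ e, c a = c b → a = b

/-- chromatic number of an `r`-graph -/
def chrNum {r : ℕ} (H : RGraph r) : ℕ := sInf {ℓ | IsPartite H ℓ}

/-- a graph is edge-critical if deleting some edge lowers its chromatic number -/
def EdgeCritical (F : RGraph 2) : Prop :=
  ∃ e ∈ F.edges, chrNum (F.deleteEdge e) < chrNum F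

/-- an `r`-graph is `2`-covered if every pair of distinct vertices lies in an edge -/
def TwoCovered {r : ℕ} (G : RGraph r) : Prop :=
  ∀ u ∈ G.verts, ∀ v ∈ G.verts, u ≠ v → ∃ e ∈ G.edges, u ∈ e ∧ v ∈ e

/-- `Q` is a blowup (with nonempty parts) of `G` -/
def IsBlowupOf {r : ℕ} (Q G : RGraph r) : Prop :=
  ∃ p : ℕ → ℕ, Set.MapsTo p ↑Q.verts ↑G.verts ∧ Set.SurjOn p ↑Q.verts ↑G.verts ∧
    ∀ e : Finset ℕ, e ⊆ Q.verts → e.card = r →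
      (e ∈ Q.edges ↔ (Set.InjOn p ↑e ∧ e.image p ∈ G.edges))

/-- the shadow `∂_{r-2} G`: the graph of all pairs of vertices covered by an edge -/
def shadow2 {r : ℕ} (G : RGraph r) : RGraph 2 where
  verts := G.verts
  edges := (G.verts.powersetCard 2).filter fun e => ∃ E ∈ G.edges, e ⊆ E
  edge_card := fun e he => (Finset.mem_powersetCard.1 (Finset.mem_filter.1 he).1).2
  edge_sub := fun e he => (Finset.mem_powersetCard.1 (Finset.mem_filter.1 he).1).1

/-- the complete `r`-graph `K_ℓ^r` on vertex set `{0, …, ℓ-1}` -/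
def completeRG (r ℓ : ℕ) : RGraph r where
  verts := Finset.range ℓ
  edges := (Finset.range ℓ).powersetCard r
  edge_card := fun e he => (Finset.mem_powersetCard.1 he).2
  edge_sub := fun e he => (Finset.mem_powersetCard.1 he).1

/-- the complete multipartite `r`-graph on `[n] = {0, …, n-1}` whose parts are the
fibres of the coloring `c`: edges are the rainbow `r`-sets. -/
def completePartite (r n : ℕ) (c : ℕ → ℕ) : RGraph r where
  verts := Finset.range n
  edges := ((Finset.range n).powersetCard r).filter fun e =>
    ∀ a ∈ e, ∀ b ∈ e, c a = c b → a = b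
  edge_card := fun e he => (Finset.mem_powersetCard.1 (Finset.mem_filter.1 he).1).2
  edge_sub := fun e he => (Finset.mem_powersetCard.1 (Finset.mem_filter.1 he).1).1

/-- the `5`-cycle `C₅` -/
def cycle5 : RGraph 2 where
  verts := Finset.range 5
  edges := {{0, 1}, {1, 2}, {2, 3}, {3, 4}, {4, 0}}
  edge_card := by decide
  edge_sub := by decide

/-- the set of (not necessarily injective) homomorphisms from `Q` to `G`,
encoded as maps `ℕ → ℕ` which are the identity outside `Q.verts` -/
def homsSet {r : ℕ} (Q G : RGraph r) : Set (ℕ → ℕ) :=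
  {φ | Set.MapsTo φ ↑Q.verts ↑G.verts ∧ (∀ e ∈ Q.edges, e.image φ ∈ G.edges) ∧
    ∀ x, x ∉ Q.verts → φ x = x}

/-- `E` is the `r`-uniform expansion `H_F^r` of the graph `F` -/
def IsExpansion (r : ℕ) (F : RGraph 2) (E : RGraph r) : Prop :=
  ∃ f : Finset ℕ → Finset ℕ,
    (∀ e ∈ F.edges, (f e).card = r - 2 ∧ Disjoint (f e) F.verts) ∧
    (∀ e ∈ F.edges, ∀ e' ∈ F.edges, e ≠ e' → Disjoint (f e) (f e')) ∧
    E.verts = F.verts ∪ F.edges.biUnion f ∧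
    E.edges = F.edges.image fun e => e ∪ f e

/-- `H` is `H_F^r`-free -/
def ExpansionFree (r : ℕ) (F : RGraph 2) (H : RGraph r) : Prop :=
  ∀ E : RGraph r, IsExpansion r F E → FreeOf E H

/-- `inj(n, Q, H_F^r)` -/
def injExExp (r : ℕ) (Q : RGraph r) (F : RGraph 2) (n : ℕ) : ℕ :=
  sSup {t | ∃ H : RGraph r, H.nv = n ∧ ExpansionFree r F H ∧ injc Q H = t}

/-- `inj(n, Q, F₀)` for a single forbidden `r`-graph `F₀` -/
def injExF {r : ℕ} (Q F₀ : RGraph r) (n : ℕ) : ℕ :=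
  sSup {t | ∃ H : RGraph r, H.nv = n ∧ FreeOf F₀ H ∧ injc Q H = t}

/-- max of `inj(Q, H)` over `ℓ`-partite `H` on `n` vertices -/
def injExPartite (r : ℕ) (Q : RGraph r) (ℓ n : ℕ) : ℕ :=
  sSup {t | ∃ H : RGraph r, H.nv = n ∧ IsPartite H ℓ ∧ injc Q H = t}

/-- `H` is a complete `ℓ`-partite `r`-graph (possibly with empty parts) -/
def IsCompleteMultipartite {r : ℕ} (H : RGraph r) (ℓ : ℕ) : Prop :=
  ∃ c : ℕ → ℕ, (∀ v ∈ H.verts, c v < ℓ) ∧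
    ∀ e : Finset ℕ, e ⊆ H.verts → e.card = r →
      ((∀ a ∈ e, ∀ b ∈ e, c a = c b → a = b) ↔ e ∈ H.edges)

/-- `H` is a complete `k`-partite `r`-graph with nonempty parts -/
def IsCompleteMultipartiteStrict {r : ℕ} (H : RGraph r) (k : ℕ) : Prop :=
  ∃ c : ℕ → ℕ, (∀ v ∈ H.verts, c v < k) ∧ (∀ i < k, ∃ v ∈ H.verts, c v = i) ∧
    ∀ e : Finset ℕ, e ⊆ H.verts → e.card = r →
      ((∀ a ∈ e, ∀ b ∈ e, c a = c b → a = b) ↔ e ∈ H.edges)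

/-- `T` is a balanced complete `ℓ`-partite `r`-graph (part sizes differ by at most one) -/
def IsBalancedCompleteMultipartite {r : ℕ} (T : RGraph r) (ℓ : ℕ) : Prop :=
  ∃ c : ℕ → ℕ, (∀ v ∈ T.verts, c v < ℓ) ∧
    (∀ i < ℓ, ∀ j < ℓ, (T.verts.filter fun v => c v = i).card
      ≤ (T.verts.filter fun v => c v = j).card + 1) ∧
    ∀ e : Finset ℕ, e ⊆ T.verts → e.card = r →
      ((∀ a ∈ e, ∀ b ∈ e, c a = c b → a = b) ↔ e ∈ T.edges)

/-- the `Q`-Lagrange polynomial of `G`, evaluated at a weight vector `x` -/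
def lagPoly {r : ℕ} (Q G : RGraph r) (x : ℕ → ℝ) : ℝ :=
  ∑ᶠ φ ∈ homsSet Q G, ∏ i ∈ Q.verts.image φ, x i

/-- the `Q`-Lagrangian of `G` -/
def lagrangian {r : ℕ} (Q G : RGraph r) : ℝ :=
  sSup {t | ∃ x : ℕ → ℝ, (∀ i, 0 ≤ x i) ∧ (∀ i, i ∉ G.verts → x i = 0) ∧
    (∑ i ∈ G.verts, x i) = 1 ∧ t = lagPoly Q G x}

/-- `W` is a weak expansion of the clique `K_m`: obtained from `K_m` by adding
`r - 2` new vertices to each edge, where the added sets may intersect each other -/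
def IsWeakCliqueExpansion (r m : ℕ) (W : RGraph r) : Prop :=
  ∃ (V : Finset ℕ) (f : Finset ℕ → Finset ℕ), V.card = m ∧
    (∀ e ∈ V.powersetCard 2, (f e).card = r - 2 ∧ Disjoint (f e) V) ∧
    W.verts = V ∪ (V.powersetCard 2).biUnion f ∧
    W.edges = (V.powersetCard 2).image fun e => e ∪ f e

/-- `H` is `𝒦_m^r`-free (contains no weak expansion of `K_m`) -/
def WeakExpFree (r m : ℕ) (H : RGraph r) : Prop :=
  ∀ W : RGraph r, IsWeakCliqueExpansion r m W → FreeOf W H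

/-- `inj(n, Q, 𝒦_m^r)` -/
def injExWeak (r : ℕ) (Q : RGraph r) (m n : ℕ) : ℕ :=
  sSup {t | ∃ H : RGraph r, H.nv = n ∧ WeakExpFree r m H ∧ injc Q H = t}

/-- `F₀` is `Q`-edge-stable with respect to the family of `ℓ`-partite `r`-graphs -/
def QEdgeStablePartite {r : ℕ} (Q F₀ : RGraph r) (ℓ : ℕ) : Prop :=
  ∀ ε : ℝ, 0 < ε → ∃ δ : ℝ, 0 < δ ∧ ∃ N₀ : ℕ, ∀ n ≥ N₀, ∀ H : RGraph r,
    H.nv = n → FreeOf F₀ H → (1 - δ) * (injExF Q F₀ n : ℝ) ≤ (injc Q H : ℝ) →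
    ∃ H' : RGraph r, H'.verts = H.verts ∧ H'.edges ⊆ H.edges ∧
      ((H.edges \ H'.edges).card : ℝ) ≤ ε * (n : ℝ) ^ r ∧ IsPartite H' ℓ

/-- `H_F^r` is `Q`-edge-stable with respect to the family of `ℓ`-partite `r`-graphs -/
def QEdgeStablePartiteExp (r : ℕ) (Q : RGraph r) (F : RGraph 2) (ℓ : ℕ) : Prop :=
  ∀ ε : ℝ, 0 < ε → ∃ δ : ℝ, 0 < δ ∧ ∃ N₀ : ℕ, ∀ n ≥ N₀, ∀ H : RGraph r,
    H.nv = n → ExpansionFree r F H →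
    (1 - δ) * (injExExp r Q F n : ℝ) ≤ (injc Q H : ℝ) →
    ∃ H' : RGraph r, H'.verts = H.verts ∧ H'.edges ⊆ H.edges ∧
      ((H.edges \ H'.edges).card : ℝ) ≤ ε * (n : ℝ) ^ r ∧ IsPartite H' ℓ

/-- `Q` is `F₀`-Turán-stable (with `ℓ` parts) -/
def TuranStableF {r : ℕ} (Q F₀ : RGraph r) (ℓ : ℕ) : Prop :=
  ∀ ε : ℝ, 0 < ε → ∃ δ : ℝ, 0 < δ ∧ ∃ N₀ : ℕ, ∀ n ≥ N₀, ∀ H : RGraph r,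
    H.nv = n → FreeOf F₀ H → (1 - δ) * (injExF Q F₀ n : ℝ) ≤ (injc Q H : ℝ) →
    ∃ T : RGraph r, T.verts = H.verts ∧ IsBalancedCompleteMultipartite T ℓ ∧
      (((H.edges \ T.edges).card + (T.edges \ H.edges).card : ℕ) : ℝ) ≤ ε * (n : ℝ) ^ r

/-- `Q` is `H_F^r`-Turán-stable (with `ℓ` parts) -/
def TuranStableExp (r : ℕ) (Q : RGraph r) (F : RGraph 2) (ℓ : ℕ) : Prop :=
  ∀ ε : ℝ, 0 < ε → ∃ δ : ℝ, 0 < δ ∧ ∃ N₀ : ℕ, ∀ n ≥ N₀, ∀ H : RGraph r,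
    H.nv = n → ExpansionFree r F H →
    (1 - δ) * (injExExp r Q F n : ℝ) ≤ (injc Q H : ℝ) →
    ∃ T : RGraph r, T.verts = H.verts ∧ IsBalancedCompleteMultipartite T ℓ ∧
      (((H.edges \ T.edges).card + (T.edges \ H.edges).card : ℕ) : ℝ) ≤ ε * (n : ℝ) ^ r


/-!
Split the injective homomorphisms `φ : Q → H` according to which of `u`, `v` their image
contains. Passing to `H_{u→v}` loses only those whose image contains `u` but not `v`, and
composing with the transposition `(u v)` turns those whose image contains `v` but not `u` into
new ones of exactly the lost kind. The homomorphisms hitting both `u` and `v` survive: if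
`φ x = u` and `φ y = v`, then `x, y` are uncovered in `Q`, so in a blowup of a `2`-covered graph
they lie in the same part and are twins, and `φ` maps an edge through `x` to an edge of `H`
whose `u` may be replaced by `v`. Writing `a` and `b` for the numbers of homomorphisms hitting
only `u`, resp. only `v`, this gives `inj(Q, H_{u→v}) ≥ inj(Q, H) - a + b` and symmetrically
`inj(Q, H_{v→u}) ≥ inj(Q, H) - b + a`.
-/

lemma Finset.image_erase_of_injOn {α β : Type*} [DecidableEq α] [DecidableEq β] {f : α → β}
    {s : Finset α} (hf : Set.InjOn f s) {a : α} (ha : a ∈ s) :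
    (s.erase a).image f = (s.image f).erase (f a) := by
  rw [← sdiff_singleton_eq_erase, image_sdiff_of_injOn hf (singleton_subset_iff.2 ha),
    image_singleton, sdiff_singleton_eq_erase]

lemma Finset.image_swap_of_notMem_of_notMem {α : Type*} [DecidableEq α] {s : Finset α}
    {u v : α} (hu : u ∉ s) (hv : v ∉ s) : s.image (Equiv.swap u v) = s := by
  conv_rhs => rw [← image_id (s := s)]
  refine image_congr fun w hw => Equiv.swap_apply_of_ne_of_ne ?_ ?_ <;>
    rintro rfl <;> contradiction

lemma Finset.image_swap_of_notMem_of_mem {α : Type*} [DecidableEq α] {s : Finset α}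
    {u v : α} (hu : u ∉ s) (hv : v ∈ s) : s.image (Equiv.swap u v) = insert u (s.erase v) := by
  conv_lhs => rw [← insert_erase hv]
  rw [image_insert, Equiv.swap_apply_right,
    image_swap_of_notMem_of_notMem (fun h => hu (mem_of_mem_erase h)) (notMem_erase v s)]

namespace RGraph

variable {r : ℕ}

lemma Uncovered.symm {H : RGraph r} {u v : ℕ} (h : H.Uncovered u v) : H.Uncovered v u :=
  fun e he huv => h e he huv.symm

lemma mem_symmetrize_edges_of_notMem {H : RGraph r} {u v : ℕ} {f : Finset ℕ}
    (hf : f ∈ H.edges) (hu : u ∉ f) : f ∈ (H.symmetrize u v).edges :=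
  mem_union_left _ (mem_filter.2 ⟨hf, hu⟩)

lemma insert_erase_mem_symmetrize_edges {H : RGraph r} {u v : ℕ} {f : Finset ℕ}
    (hf : f ∈ H.edges) (hv : v ∈ f) (hu : u ∉ f) (huv : u ≠ v) :
    insert u (f.erase v) ∈ (H.symmetrize u v).edges :=
  mem_union_right _ (mem_image_of_mem _ (mem_filter.2 ⟨hf, hv, hu, huv⟩))

def UncoveredTwins (Q : RGraph r) : Prop :=
  ∀ x y, y ∈ Q.verts → Q.Uncovered x y →
    ∀ e ∈ Q.edges, x ∈ e → insert y (e.erase x) ∈ Q.edges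

end RGraph

section Blowup

variable {r : ℕ} {Q G : RGraph r} {p : ℕ → ℕ}

structure IsBlowupMap (Q G : RGraph r) (p : ℕ → ℕ) : Prop where
  mapsTo : Set.MapsTo p ↑Q.verts ↑G.verts
  surjOn : Set.SurjOn p ↑Q.verts ↑G.verts
  mem_edges_iff : ∀ e : Finset ℕ, e ⊆ Q.verts → e.card = r →
    (e ∈ Q.edges ↔ (Set.InjOn p ↑e ∧ e.image p ∈ G.edges))

lemma IsBlowupOf.exists_isBlowupMap (h : IsBlowupOf Q G) : ∃ p, IsBlowupMap Q G p :=
  let ⟨p, hmaps, hsurj, hedges⟩ := h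
  ⟨p, hmaps, hsurj, hedges⟩

lemma IsBlowupMap.mem_edges_of_image_mem (hp : IsBlowupMap Q G p) {f : Finset ℕ}
    (hf : f ⊆ Q.verts) (hcard : f.card = r) (himg : f.image p ∈ G.edges) : f ∈ Q.edges :=
  (hp.mem_edges_iff f hf hcard).2 ⟨card_image_iff.1 (by rw [G.edge_card _ himg, hcard]), himg⟩

lemma IsBlowupMap.exists_edge_of_ne (hp : IsBlowupMap Q G p) (hG : TwoCovered G) {x y : ℕ}
    (hx : x ∈ Q.verts) (hy : y ∈ Q.verts) (hne : p x ≠ p y) :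
    ∃ e ∈ Q.edges, x ∈ e ∧ y ∈ e := by
  obtain ⟨E, hE, hxE, hyE⟩ := hG _ (hp.mapsTo hx) _ (hp.mapsTo hy) hne
  have hsurj : ∀ w ∈ G.verts, ∃ z ∈ Q.verts, p z = w := fun w hw => hp.surjOn hw
  choose! s hsQ hps using hsurj
  let q : ℕ → ℕ := fun w => if w = p x then x else if w = p y then y else s w
  have hq : ∀ w ∈ E, q w ∈ Q.verts ∧ p (q w) = w := by
    intro w hw
    simp only [q]
    split_ifs with h₁ h₂
    · exact ⟨hx, h₁.symm⟩
    · exact ⟨hy, h₂.symm⟩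
    · exact ⟨hsQ w (G.edge_sub E hE hw), hps w (G.edge_sub E hE hw)⟩
  have hleft : Set.LeftInvOn p q E := fun w hw => (hq w hw).2
  refine ⟨E.image q, hp.mem_edges_of_image_mem ?_ ?_ ?_, mem_image.2 ⟨p x, hxE, if_pos rfl⟩,
    mem_image.2 ⟨p y, hyE, by simp [q, Ne.symm hne]⟩⟩
  · exact image_subset_iff.2 fun w hw => (hq w hw).1
  · rw [card_image_of_injOn hleft.injOn, G.edge_card E hE]
  · rwa [image_image, image_congr (show Set.EqOn (p ∘ q) id E from hleft), image_id]

lemma IsBlowupOf.uncoveredTwins (hQG : IsBlowupOf Q G) (hG : TwoCovered G) :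
    Q.UncoveredTwins := by
  intro x y hy hxy e he hxe
  obtain ⟨p, hp⟩ := hQG.exists_isBlowupMap
  have hx : x ∈ Q.verts := Q.edge_sub e he hxe
  have hpxy : p x = p y := by
    by_contra hne
    obtain ⟨f, hf, hxf, hyf⟩ := hp.exists_edge_of_ne hG hx hy hne
    exact hxy f hf ⟨hxf, hyf⟩
  have hye : y ∉ e.erase x := fun h => hxy e he ⟨hxe, mem_of_mem_erase h⟩
  refine hp.mem_edges_of_image_mem
    (insert_subset hy ((erase_subset x e).trans (Q.edge_sub e he))) ?_ ?_
  · rw [card_insert_of_notMem hye, card_erase_add_one hxe, Q.edge_card e he]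
  · rw [image_insert, ← hpxy, ← image_insert, insert_erase hxe]
    exact ((hp.mem_edges_iff e (Q.edge_sub e he) (Q.edge_card e he)).1 he).2

end Blowup

section Homomorphisms

variable {r : ℕ} {Q H : RGraph r} {u v : ℕ}

lemma injHoms_finite (Q H : RGraph r) : (injHoms Q H).Finite := by
  refine (Set.finite_range fun g : Q.verts → H.verts =>
    fun x => if hx : x ∈ Q.verts then (g ⟨x, hx⟩ : ℕ) else x).subset ?_
  rintro φ ⟨-, hmaps, -, hid⟩
  refine ⟨fun x => ⟨φ x, hmaps x.2⟩, funext fun x => ?_⟩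
  by_cases hx : x ∈ Q.verts
  · simp [hx]
  · simp [hx, hid x hx]

lemma mem_injHoms_symmetrize (hQ : Q.UncoveredTwins) (huv : u ≠ v)
    (hunc : H.Uncovered u v) {φ : ℕ → ℕ} (hφ : φ ∈ injHoms Q H)
    (hhit : u ∈ φ '' Q.verts → v ∈ φ '' Q.verts) :
    φ ∈ injHoms Q (H.symmetrize u v) := by
  obtain ⟨hinj, hmaps, hedge, hid⟩ := hφ
  refine ⟨hinj, fun x hx => mem_insert_of_mem (hmaps hx), fun e he => ?_, hid⟩
  by_cases hu : u ∈ e.image φ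
  swap
  · exact RGraph.mem_symmetrize_edges_of_notMem (hedge e he) hu
  obtain ⟨x, hxe, rfl⟩ := mem_image.1 hu
  obtain ⟨y, hy, rfl⟩ := hhit ⟨x, Q.edge_sub e he hxe, rfl⟩
  have hxy : Q.Uncovered x y := fun f hf ⟨hxf, hyf⟩ =>
    hunc _ (hedge f hf) ⟨mem_image_of_mem φ hxf, mem_image_of_mem φ hyf⟩
  have hve : φ y ∉ (e.image φ).erase (φ x) := fun h =>
    hunc _ (hedge e he) ⟨hu, mem_of_mem_erase h⟩
  have htwin := hedge _ (hQ x y hy hxy e he hxe)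
  rw [image_insert, image_erase_of_injOn (hinj.mono (coe_subset.2 (Q.edge_sub e he))) hxe]
    at htwin
  have hback := RGraph.insert_erase_mem_symmetrize_edges htwin (mem_insert_self _ _)
    (by simp [huv]) huv
  rwa [erase_insert hve, insert_erase hu] at hback

def redirect (Q : RGraph r) (u v : ℕ) (φ : ℕ → ℕ) : ℕ → ℕ :=
  fun x => if x ∈ Q.verts then Equiv.swap u v (φ x) else φ x

lemma redirect_injective (Q : RGraph r) (u v : ℕ) : Function.Injective (redirect Q u v) := by
  intro φ ψ h
  funext x
  have hx := congrFun h x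
  simp only [redirect] at hx
  split_ifs at hx
  exacts [(Equiv.injective _) hx, hx]

def injHomsHitAvoid (Q H : RGraph r) (u v : ℕ) : Set (ℕ → ℕ) :=
  {φ ∈ injHoms Q H | u ∈ φ '' Q.verts ∧ v ∉ φ '' Q.verts}

lemma redirect_mem_injHomsHitAvoid_symmetrize (huv : u ≠ v) {φ : ℕ → ℕ}
    (hφ : φ ∈ injHomsHitAvoid Q H v u) :
    redirect Q u v φ ∈ injHomsHitAvoid Q (H.symmetrize u v) u v := by
  obtain ⟨⟨hinj, hmaps, hedge, hid⟩, ⟨y, hy, rfl⟩, hu⟩ := hφ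
  have heq : Set.EqOn (redirect Q u (φ y) φ) (Equiv.swap u (φ y) ∘ φ) Q.verts :=
    fun x hx => if_pos hx
  refine ⟨⟨((Equiv.injective _).comp_injOn hinj).congr heq.symm, fun x hx => ?_,
    fun e he => ?_, fun x hx => (if_neg hx).trans (hid x hx)⟩, ⟨y, hy, ?_⟩, ?_⟩
  · rw [heq hx, Function.comp_apply, Equiv.swap_apply_def]
    split_ifs with h₁ h₂
    · exact absurd ⟨x, hx, h₁⟩ hu
    · exact mem_insert_self _ _
    · exact mem_insert_of_mem (hmaps hx)
  · have hue : u ∉ e.image φ := fun h =>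
      let ⟨x, hx, hxu⟩ := mem_image.1 h
      hu ⟨x, Q.edge_sub e he hx, hxu⟩
    rw [image_congr (heq.mono (coe_subset.2 (Q.edge_sub e he))), ← image_image]
    by_cases hve : φ y ∈ e.image φ
    · rw [image_swap_of_notMem_of_mem hue hve]
      exact RGraph.insert_erase_mem_symmetrize_edges (hedge e he) hve hue huv
    · rw [image_swap_of_notMem_of_notMem hue hve]
      exact RGraph.mem_symmetrize_edges_of_notMem (hedge e he) hue
  · rw [heq hy, Function.comp_apply, Equiv.swap_apply_right]
  · rintro ⟨x, hx, hxv⟩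
    rw [heq hx, Function.comp_apply, Equiv.swap_apply_eq_iff, Equiv.swap_apply_right] at hxv
    exact hu ⟨x, hx, hxv⟩

lemma injc_eq_ncard_diff_add_ncard (Q H : RGraph r) (u v : ℕ) :
    injc Q H =
      (injHoms Q H \ injHomsHitAvoid Q H u v).ncard + (injHomsHitAvoid Q H u v).ncard :=
  (Set.ncard_sdiff_add_ncard_of_subset (Set.sep_subset _ _) (injHoms_finite Q H)).symm

lemma ncard_diff_add_ncard_le_injc_symmetrize (hQ : Q.UncoveredTwins) (huv : u ≠ v)
    (hunc : H.Uncovered u v) :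
    (injHoms Q H \ injHomsHitAvoid Q H u v).ncard + (injHomsHitAvoid Q H v u).ncard
      ≤ injc Q (H.symmetrize u v) := by
  have hsurvive : injHoms Q H \ injHomsHitAvoid Q H u v ⊆ injHoms Q (H.symmetrize u v) :=
    fun φ ⟨hφ, hnot⟩ => mem_injHoms_symmetrize hQ huv hunc hφ fun hu => by
      by_contra hv
      exact hnot ⟨hφ, hu, hv⟩
  have hredirect : redirect Q u v '' injHomsHitAvoid Q H v u
      ⊆ injHomsHitAvoid Q (H.symmetrize u v) u v := by
    rintro _ ⟨φ, hφ, rfl⟩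
    exact redirect_mem_injHomsHitAvoid_symmetrize huv hφ
  have hdisj : Disjoint (injHoms Q H \ injHomsHitAvoid Q H u v)
      (redirect Q u v '' injHomsHitAvoid Q H v u) :=
    Set.disjoint_left.2 fun ψ ⟨hψ, hnot⟩ hψ' => hnot ⟨hψ, (hredirect hψ').2⟩
  have hfin := injHoms_finite Q (H.symmetrize u v)
  have hsub : injHomsHitAvoid Q (H.symmetrize u v) u v ⊆ injHoms Q (H.symmetrize u v) :=
    Set.sep_subset _ _
  calc _ = (injHoms Q H \ injHomsHitAvoid Q H u v).ncard
        + (redirect Q u v '' injHomsHitAvoid Q H v u).ncard := by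
          rw [(redirect_injective Q u v).injOn.ncard_image]
    _ = (injHoms Q H \ injHomsHitAvoid Q H u v
          ∪ redirect Q u v '' injHomsHitAvoid Q H v u).ncard :=
          (Set.ncard_union_eq hdisj (hfin.subset hsurvive)
            (hfin.subset (hredirect.trans hsub))).symm
    _ ≤ injc Q (H.symmetrize u v) :=
          Set.ncard_le_ncard (Set.union_subset hsurvive (hredirect.trans hsub)) hfin

end Homomorphisms

theorem statement17_general (r : ℕ)
    (Q G : RGraph r) (hG2 : TwoCovered G) (hQG : IsBlowupOf Q G) :
    ∀ H : RGraph r, ∀ u ∈ H.verts, ∀ v ∈ H.verts, u ≠ v → H.Uncovered u v →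
      (2 * injc Q H ≤ injc Q (H.symmetrize u v) + injc Q (H.symmetrize v u)) ∧
      (injc Q H < max (injc Q (H.symmetrize u v)) (injc Q (H.symmetrize v u)) ∨
        (injc Q H = injc Q (H.symmetrize u v) ∧
          injc Q H = injc Q (H.symmetrize v u))) := by
  intro H u _ v _ huv hunc
  have hQ := hQG.uncoveredTwins hG2
  have huv_le := ncard_diff_add_ncard_le_injc_symmetrize hQ huv hunc
  have hvu_le := ncard_diff_add_ncard_le_injc_symmetrize hQ huv.symm hunc.symm
  have hsplit_uv := injc_eq_ncard_diff_add_ncard Q H u v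
  have hsplit_vu := injc_eq_ncard_diff_add_ncard Q H v u
  have hsum : 2 * injc Q H ≤ injc Q (H.symmetrize u v) + injc Q (H.symmetrize v u) := by
    omega
  exact ⟨hsum, by omega⟩

/-- **Theorem (Statement 17).** If `Q` is a blowup of a `2`-covered `r`-graph, then for
every `H` and every uncovered pair `u, v` of vertices, `2 inj(Q,H) ≤ inj(Q,H_{u→v}) +
inj(Q,H_{v→u})`; consequently the map `H ↦ inj(Q,H)` is symmetrization-increasing. -/
theorem statement17 (r : ℕ) (hr : 2 ≤ r)
    (Q G : RGraph r) (hG2 : TwoCovered G) (hQG : IsBlowupOf Q G) :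
    ∀ H : RGraph r, ∀ u ∈ H.verts, ∀ v ∈ H.verts, u ≠ v → H.Uncovered u v →
      (2 * injc Q H ≤ injc Q (H.symmetrize u v) + injc Q (H.symmetrize v u)) ∧
      (injc Q H < max (injc Q (H.symmetrize u v)) (injc Q (H.symmetrize v u)) ∨
        (injc Q H = injc Q (H.symmetrize u v) ∧
          injc Q H = injc Q (H.symmetrize v u))) :=
  statement17_general r Q G hG2 hQG

end
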